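/- arXiv:2002.12120 — 10 statements merged into one kernel-verified Lean document; each statement's English description precedes it below -/
import Mathlib

section
/- Let (Ω, ⋆) be an associative semigroup with two additional operations ◁, ▷. Then (Ω, ⋆, ⋆, ◁, ▷) is an EDS if and only if for all α, β, γ ∈ Ω: α▷(β⋆γ) = α▷β; (α⋆β)◁γ = β◁γ; (α◁β)⋆(β◁γ) = α◁(β⋆γ); (α◁β)◁(β◁γ) = β◁γ; (α◁β)▷(β◁γ) = β▷γ; (α▷β)⋆(β▷γ) = (α⋆β)▷γ; (α▷β)◁(β▷γ) = α◁β; (α▷β)▷(β▷γ) = α▷β. -/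
/-!
When both diassociative operations are `⋆`, the EDS axioms `α ▷ (β ⋆ γ) = α ▷ β` and
`(α ⋆ β) ◁ γ = β ◁ γ` turn the arguments `(α ⋆ β) ◁ γ` and `α ▷ (β ⋆ γ)` occurring in the other
axioms into `β ◁ γ` and `α ▷ β`; after this the `←`- and `→`-versions of those axioms coincide,
leaving the eight identities. Diassociativity of `(⋆, ⋆)` is just associativity of `⋆`.
-/

/-- A diassociative semigroup: two operations `l` (←) and `r` (→). -/
def IsDiassoc {Ω : Type*} (l r : Ω → Ω → Ω) : Prop :=
  ∀ a b c : Ω,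
    l (l a b) c = l a (l b c) ∧ l a (l b c) = l a (r b c) ∧
    l (r a b) c = r a (l b c) ∧
    r (r a b) c = r a (r b c) ∧ r (l a b) c = r a (r b c)

/-- An extended diassociative semigroup (EDS): a diassociative semigroup `(l, r)`
(`←`, `→`) with two further operations `tl` (◁) and `tr` (▷) satisfying the ten
EDS axioms. -/
def IsEDS {Ω : Type*} (l r tl tr : Ω → Ω → Ω) : Prop :=
  IsDiassoc l r ∧ ∀ a b c : Ω,
    tr a (l b c) = tr a b ∧
    tl (r a b) c = tl b c ∧
    l (tl a b) (tl (l a b) c) = tl a (l b c) ∧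
    tl (tl a b) (tl (l a b) c) = tl b c ∧
    r (tl a b) (tl (l a b) c) = tl a (r b c) ∧
    tr (tl a b) (tl (l a b) c) = tr b c ∧
    l (tr a (r b c)) (tr b c) = tr (l a b) c ∧
    tl (tr a (r b c)) (tr b c) = tl a b ∧
    r (tr a (r b c)) (tr b c) = tr (r a b) c ∧
    tr (tr a (r b c)) (tr b c) = tr a b

theorem isDiassoc_self_iff {Ω : Type*} (star : Ω → Ω → Ω) :
    IsDiassoc star star ↔ ∀ a b c : Ω, star (star a b) c = star a (star b c) :=
  ⟨fun h a b c => (h a b c).1, fun h a b c => ⟨h a b c, rfl, h a b c, h a b c, h a b c⟩⟩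

theorem isEDS_self_iff {Ω : Type*} (star tl tr : Ω → Ω → Ω) :
    IsEDS star star tl tr ↔ IsDiassoc star star ∧
      ∀ a b c : Ω,
        tr a (star b c) = tr a b ∧
        tl (star a b) c = tl b c ∧
        star (tl a b) (tl b c) = tl a (star b c) ∧
        tl (tl a b) (tl b c) = tl b c ∧
        tr (tl a b) (tl b c) = tr b c ∧
        star (tr a b) (tr b c) = tr (star a b) c ∧
        tl (tr a b) (tr b c) = tl a b ∧
        tr (tr a b) (tr b c) = tr a b := by
  refine and_congr_right fun _ => ⟨fun h a b c => ?_, fun h a b c => ?_⟩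
  · obtain ⟨tr_star, tl_star, h3, h4, -, h6, h7, h8, -, h10⟩ := h a b c
    rw [tl_star] at h3 h4 h6
    rw [tr_star] at h7 h8 h10
    exact ⟨tr_star, tl_star, h3, h4, h6, h7, h8, h10⟩
  · obtain ⟨tr_star, tl_star, h3, h4, h5, h6, h7, h8⟩ := h a b c
    rw [tl_star, tr_star]
    exact ⟨rfl, rfl, h3, h4, h3, h5, h6, h7, h6, h8⟩

/-- For an associative semigroup `(Ω, ⋆)` with two further operations `◁ = tl`,
`▷ = tr`, `(Ω, ⋆, ⋆, ◁, ▷)` is an EDS iff the eight listed identities hold. -/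
theorem stmt5 {Ω : Type*} (star tl tr : Ω → Ω → Ω)
    (hassoc : ∀ a b c : Ω, star (star a b) c = star a (star b c)) :
    IsEDS star star tl tr ↔
      ∀ a b c : Ω,
        tr a (star b c) = tr a b ∧
        tl (star a b) c = tl b c ∧
        star (tl a b) (tl b c) = tl a (star b c) ∧
        tl (tl a b) (tl b c) = tl b c ∧
        tr (tl a b) (tl b c) = tr b c ∧
        star (tr a b) (tr b c) = tr (star a b) c ∧
        tl (tr a b) (tr b c) = tl a b ∧
        tr (tr a b) (tr b c) = tr a b := by
  rw [isEDS_self_iff, isDiassoc_self_iff]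
  exact and_iff_right hassoc
end

section
/- Let Ω be a set with ← and → given by α←β = α, α→β = β, together with operations ◁, ▷. Then (Ω, ←, →, ◁, ▷) is an EDS if and only if for all α, β, γ ∈ Ω: (α◁β)◁(α◁γ) = β◁γ; (α◁β)▷(α◁γ) = β▷γ; (α▷γ)◁(β▷γ) = α◁β; (α▷γ)▷(β▷γ) = α▷β. -/
/-! With `←` and `→` the two projections, the diassociative laws and six of the ten EDS axioms
hold definitionally; the remaining four axioms are exactly the four listed identities. -/

theorem isDiassoc_fst_snd {Ω : Type*} : IsDiassoc (fun a (_ : Ω) => a) (fun (_ : Ω) b => b) :=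
  fun _ _ _ => ⟨rfl, rfl, rfl, rfl, rfl⟩

/-- For `α←β = α`, `α→β = β` and operations `◁ = tl`, `▷ = tr`,
`(Ω, ←, →, ◁, ▷)` is an EDS iff the four listed identities hold. -/
theorem stmt6 {Ω : Type*} (tl tr : Ω → Ω → Ω) :
    IsEDS (fun a _ => a) (fun _ b => b) tl tr ↔
      ∀ a b c : Ω,
        tl (tl a b) (tl a c) = tl b c ∧
        tr (tl a b) (tl a c) = tr b c ∧
        tl (tr a c) (tr b c) = tl a b ∧
        tr (tr a c) (tr b c) = tr a b := by
  constructor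
  · rintro ⟨-, h⟩ a b c
    obtain ⟨-, -, -, tl_tl, -, tr_tl, -, tl_tr, -, tr_tr⟩ := h a b c
    exact ⟨tl_tl, tr_tl, tl_tr, tr_tr⟩
  · intro h
    refine ⟨isDiassoc_fst_snd, fun a b c => ?_⟩
    obtain ⟨tl_tl, tr_tl, tl_tr, tr_tr⟩ := h a b c
    exact ⟨rfl, rfl, rfl, tl_tl, rfl, tr_tl, rfl, tl_tr, rfl, tr_tr⟩
end

section
/- Let (Ω, ←, →) be a diassociative semigroup and φ◁, φ▷ : Ω → Ω two maps. Define α◁β = φ◁(β) and α▷β = φ▷(α). Then (Ω, ←, →, ◁, ▷) is an EDS if and only if φ◁ = φ◁∘φ◁ = φ◁∘φ▷, φ▷ = φ▷∘φ◁ = φ▷∘φ▷, and both φ◁ and φ▷ are morphisms of diassociative semigroups (they commute with ← and →). -/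
/-- For a diassociative semigroup `(Ω, ←, →)` and maps `φ◁, φ▷ : Ω → Ω`, setting
`α◁β = φ◁(β)`, `α▷β = φ▷(α)` yields an EDS iff `φ◁ = φ◁∘φ◁ = φ◁∘φ▷`,
`φ▷ = φ▷∘φ◁ = φ▷∘φ▷`, and `φ◁`, `φ▷` are diassociative semigroup morphisms. -/
theorem stmt7 {Ω : Type*} (l r : Ω → Ω → Ω) (h : IsDiassoc l r)
    (φl φr : Ω → Ω) :
    IsEDS l r (fun _ b => φl b) (fun a _ => φr a) ↔
      ((∀ a, φl (φl a) = φl a) ∧ (∀ a, φl (φr a) = φl a) ∧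
       (∀ a, φr (φl a) = φr a) ∧ (∀ a, φr (φr a) = φr a) ∧
       (∀ a b, φl (l a b) = l (φl a) (φl b)) ∧
       (∀ a b, φl (r a b) = r (φl a) (φl b)) ∧
       (∀ a b, φr (l a b) = l (φr a) (φr b)) ∧
       (∀ a b, φr (r a b) = r (φr a) (φr b))) := by
  constructor
  · rintro ⟨-, H⟩
    -- `H x y z` lists axioms 1–10 at `(x, y, z)`;
    -- the `◁`-axioms only see `(y, z)`, the `▷`-axioms only `(x, y)`.
    refine ⟨fun a => ?_, fun a => ?_, fun a => ?_, fun a => ?_,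
      fun a b => ?_, fun a b => ?_, fun a b => ?_, fun a b => ?_⟩
    · obtain ⟨-, -, -, ax4, -⟩ := H a a a; exact ax4
    · obtain ⟨-, -, -, -, -, -, -, ax8, -⟩ := H a a a; exact ax8
    · obtain ⟨-, -, -, -, -, ax6, -⟩ := H a a a; exact ax6
    · obtain ⟨-, -, -, -, -, -, -, -, -, ax10⟩ := H a a a; exact ax10
    · obtain ⟨-, -, ax3, -⟩ := H a a b; exact ax3.symm
    · obtain ⟨-, -, -, -, ax5, -⟩ := H a a b; exact ax5.symm
    · obtain ⟨-, -, -, -, -, -, ax7, -⟩ := H a b b; exact ax7.symm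
    · obtain ⟨-, -, -, -, -, -, -, -, ax9, -⟩ := H a b b; exact ax9.symm
  · rintro ⟨hl_idem, hl_r, hr_l, hr_idem, hl_mapL, hl_mapR, hr_mapL, hr_mapR⟩
    exact ⟨h, fun a b c => ⟨rfl, rfl, (hl_mapL b c).symm, hl_idem c, (hl_mapR b c).symm,
      hr_l b, (hr_mapL a b).symm, hl_r b, (hr_mapR a b).symm, hr_idem a⟩⟩
end

section
/- Let (Ω, ⋆, ⋆, ◁, ▷) be an EDS such that (Ω, ⋆) is a group. Then there exist group endomorphisms φ◁, φ▷ of Ω with φ◁² = φ◁, φ▷² = φ▷, ker φ◁ = ker φ▷, and such that α◁β = φ◁(β) and α▷β = φ▷(α) for all α, β ∈ Ω. In particular Ω = K ⋊ im(φ◁) = K ⋊ im(φ▷) where K is the common kernel. -/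
/-!
Over a group, the EDS axioms with one argument set to `1` say that `α ◁ β` does not depend on `α`
and `α ▷ β` does not depend on `β`, that `β ↦ 1 ◁ β` and `α ↦ α ▷ 1` are multiplicative and
idempotent, and that each absorbs the other when composed on the inside. The latter forces the two
kernels to coincide, and the kernel of an idempotent endomorphism complements its image via
`g = (g * φ(g)⁻¹) * φ(g)`.
-/

namespace MonoidHom

variable {G N : Type*} [Group G] [Group N]

theorem ker_le_ker_of_apply_apply {φ : G →* G} {ψ : G →* N} (h : ∀ g, ψ (φ g) = ψ g) :
    φ.ker ≤ ψ.ker := fun g hg => by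
  rw [mem_ker, ← h, mem_ker.mp hg, map_one]

theorem isComplement'_ker_range_of_idempotent (φ : G →* G) (hφ : ∀ g, φ (φ g) = φ g) :
    φ.ker.IsComplement' φ.range := by
  refine Subgroup.isComplement'_of_disjoint_and_mul_eq_univ ?_ ?_
  · rw [Subgroup.disjoint_def]
    rintro _ hg ⟨x, rfl⟩
    rwa [mem_ker, hφ] at hg
  · refine Set.eq_univ_of_forall fun g => ⟨g * (φ g)⁻¹, ?_, φ g, ⟨g, rfl⟩, inv_mul_cancel_right g _⟩
    simp [mem_ker, hφ]

end MonoidHom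

namespace IsEDS

variable {G : Type*} [Group G] {tl tr : G → G → G}

theorem tl_eq_tl_one (h : IsEDS (· * ·) (· * ·) tl tr) (a b : G) : tl a b = tl 1 b := by
  simpa using (h.2 a 1 b).2.1

theorem tr_eq_tr_one (h : IsEDS (· * ·) (· * ·) tl tr) (a b : G) : tr a b = tr a 1 := by
  simpa using (h.2 a 1 b).1

def leftHom (h : IsEDS (· * ·) (· * ·) tl tr) : G →* G :=
  MonoidHom.mk' (tl 1) fun b c => by
    simpa [← h.tl_eq_tl_one b c] using ((h.2 1 b c).2.2.1).symm

def rightHom (h : IsEDS (· * ·) (· * ·) tl tr) : G →* G :=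
  MonoidHom.mk' (tr · 1) fun a b => by
    simpa [← h.tr_eq_tr_one a b] using ((h.2 a b 1).2.2.2.2.2.2.1).symm

theorem tl_eq_leftHom (h : IsEDS (· * ·) (· * ·) tl tr) (a b : G) : tl a b = h.leftHom b :=
  h.tl_eq_tl_one a b

theorem tr_eq_rightHom (h : IsEDS (· * ·) (· * ·) tl tr) (a b : G) : tr a b = h.rightHom a :=
  h.tr_eq_tr_one a b

theorem leftHom_leftHom (h : IsEDS (· * ·) (· * ·) tl tr) (g : G) :
    h.leftHom (h.leftHom g) = h.leftHom g := by
  simpa [h.tl_eq_leftHom] using (h.2 1 1 g).2.2.2.1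

theorem rightHom_rightHom (h : IsEDS (· * ·) (· * ·) tl tr) (g : G) :
    h.rightHom (h.rightHom g) = h.rightHom g := by
  simpa [h.tr_eq_rightHom] using (h.2 g 1 1).2.2.2.2.2.2.2.2.2

theorem rightHom_leftHom (h : IsEDS (· * ·) (· * ·) tl tr) (g : G) :
    h.rightHom (h.leftHom g) = h.rightHom g := by
  simpa [h.tl_eq_leftHom, h.tr_eq_rightHom] using (h.2 1 g 1).2.2.2.2.2.1

theorem leftHom_rightHom (h : IsEDS (· * ·) (· * ·) tl tr) (g : G) :
    h.leftHom (h.rightHom g) = h.leftHom g := by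
  simpa [h.tl_eq_leftHom, h.tr_eq_rightHom] using (h.2 1 g 1).2.2.2.2.2.2.2.1

theorem ker_leftHom (h : IsEDS (· * ·) (· * ·) tl tr) : h.leftHom.ker = h.rightHom.ker :=
  le_antisymm (MonoidHom.ker_le_ker_of_apply_apply h.rightHom_leftHom)
    (MonoidHom.ker_le_ker_of_apply_apply h.leftHom_rightHom)

end IsEDS

/-- For an EDS `(Ω, ⋆, ⋆, ◁, ▷)` where `(Ω, ⋆)` is a group: there are group
endomorphisms `φ◁`, `φ▷` with `φ◁² = φ◁`, `φ▷² = φ▷`, equal kernels, and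
`α◁β = φ◁(β)`, `α▷β = φ▷(α)`; moreover `Ω = K ⋊ im φ◁ = K ⋊ im φ▷` (the kernel
is a complement of each image). -/
theorem stmt9 {G : Type*} [Group G] (tl tr : G → G → G)
    (h : IsEDS (fun a b => a * b) (fun a b => a * b) tl tr) :
    ∃ φl φr : G →* G,
      (∀ g, φl (φl g) = φl g) ∧ (∀ g, φr (φr g) = φr g) ∧
      φl.ker = φr.ker ∧
      (∀ a b, tl a b = φl b) ∧ (∀ a b, tr a b = φr a) ∧
      Subgroup.IsComplement' φl.ker φl.range ∧
      Subgroup.IsComplement' φr.ker φr.range :=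
  ⟨h.leftHom, h.rightHom, h.leftHom_leftHom, h.rightHom_rightHom, h.ker_leftHom,
    h.tl_eq_leftHom, h.tr_eq_rightHom,
    h.leftHom.isComplement'_ker_range_of_idempotent h.leftHom_leftHom,
    h.rightHom.isComplement'_ker_range_of_idempotent h.rightHom_rightHom⟩
end

section
/- A set Ω with four operations ←, →, ◁, ▷ is an EDS if and only if the maps φ← : Ω² → Ω², (α,β) ↦ (α←β, α◁β), and φ→ : Ω² → Ω², (α,β) ↦ (α→β, α▷β), together with the swap τ(α,β) = (β,α), satisfy the five braiding-type identities: (τ⊗Id)∘(Id⊗φ←)∘(τ⊗Id)∘(φ→⊗Id) = (φ→⊗Id)∘(Id⊗φ←); (Id⊗φ←)∘(τ⊗Id)∘(Id⊗φ←)∘(τ⊗Id)∘(φ←⊗Id) = (φ←⊗Id)∘(Id⊗φ←); (Id⊗φ→)∘(τ⊗Id)∘(Id⊗φ←)∘(τ⊗Id)∘(φ←⊗Id) = (φ←⊗Id)∘(Id⊗φ→); (Id⊗φ←)∘(φ→⊗Id)∘(Id⊗φ→) = (φ→⊗Id)∘(Id⊗τ)∘(φ←⊗Id); (Id⊗φ→)∘(φ→⊗Id)∘(Id⊗φ→)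 = (φ→⊗Id)∘(Id⊗τ)∘(φ→⊗Id), where these are maps on Ω³ with f⊗Id acting on the first two components and Id⊗f on the last two. -/
/-- Apply a map of pairs to the first two components of a triple. -/
def onFirstTwo {Ω : Type*} (f : Ω × Ω → Ω × Ω) : Ω × Ω × Ω → Ω × Ω × Ω :=
  fun p => ((f (p.1, p.2.1)).1, (f (p.1, p.2.1)).2, p.2.2)

/-- Apply a map of pairs to the last two components of a triple. -/
def onLastTwo {Ω : Type*} (f : Ω × Ω → Ω × Ω) : Ω × Ω × Ω → Ω × Ω × Ω :=
  fun p => (p.1, f p.2)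

/-- The swap `τ(α,β) = (β,α)`. -/
def swapPair {Ω : Type*} : Ω × Ω → Ω × Ω := fun p => (p.2, p.1)

section BraidRelations

variable {Ω : Type*} (f g f' g' : Ω → Ω → Ω)

theorem braid_onFirstTwo_swap_iff :
    onFirstTwo swapPair ∘ onLastTwo (fun p => (f p.1 p.2, g p.1 p.2)) ∘ onFirstTwo swapPair ∘
        onFirstTwo (fun p => (f' p.1 p.2, g' p.1 p.2)) =
      onFirstTwo (fun p => (f' p.1 p.2, g' p.1 p.2)) ∘ onLastTwo (fun p => (f p.1 p.2, g p.1 p.2)) ↔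
    ∀ a b c, f (f' a b) c = f' a (f b c) ∧ g' a b = g' a (f b c) ∧ g (f' a b) c = g b c := by
  simp only [funext_iff, Prod.forall, onFirstTwo, onLastTwo, swapPair, Function.comp_apply,
    Prod.mk.injEq]

theorem braid_twice_swap_iff :
    onLastTwo (fun p => (f' p.1 p.2, g' p.1 p.2)) ∘ onFirstTwo swapPair ∘
        onLastTwo (fun p => (f p.1 p.2, g p.1 p.2)) ∘ onFirstTwo swapPair ∘
        onFirstTwo (fun p => (f p.1 p.2, g p.1 p.2)) =
      onFirstTwo (fun p => (f p.1 p.2, g p.1 p.2)) ∘ onLastTwo (fun p => (f' p.1 p.2, g' p.1 p.2)) ↔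
    ∀ a b c, f (f a b) c = f a (f' b c) ∧ f' (g a b) (g (f a b) c) = g a (f' b c) ∧
      g' (g a b) (g (f a b) c) = g' b c := by
  simp only [funext_iff, Prod.forall, onFirstTwo, onLastTwo, swapPair, Function.comp_apply,
    Prod.mk.injEq]

theorem braid_onLastTwo_swap_iff :
    onLastTwo (fun p => (f' p.1 p.2, g' p.1 p.2)) ∘ onFirstTwo (fun p => (f p.1 p.2, g p.1 p.2)) ∘
        onLastTwo (fun p => (f p.1 p.2, g p.1 p.2)) =
      onFirstTwo (fun p => (f p.1 p.2, g p.1 p.2)) ∘ onLastTwo swapPair ∘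
        onFirstTwo (fun p => (f' p.1 p.2, g' p.1 p.2)) ↔
    ∀ a b c, f a (f b c) = f (f' a b) c ∧ f' (g a (f b c)) (g b c) = g (f' a b) c ∧
      g' (g a (f b c)) (g b c) = g' a b := by
  simp only [funext_iff, Prod.forall, onFirstTwo, onLastTwo, swapPair, Function.comp_apply,
    Prod.mk.injEq]

end BraidRelations

/-- `(Ω, ←, →, ◁, ▷)` is an EDS iff the maps `φ←(α,β) = (α←β, α◁β)` and
`φ→(α,β) = (α→β, α▷β)` together with the swap `τ` satisfy the five
braiding-type identities on `Ω³`. -/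
theorem stmt10 {Ω : Type*} (l r tl tr : Ω → Ω → Ω) :
    IsEDS l r tl tr ↔
      (let φl : Ω × Ω → Ω × Ω := fun p => (l p.1 p.2, tl p.1 p.2)
       let φr : Ω × Ω → Ω × Ω := fun p => (r p.1 p.2, tr p.1 p.2)
       (onFirstTwo swapPair ∘ onLastTwo φl ∘ onFirstTwo swapPair ∘ onFirstTwo φr
          = onFirstTwo φr ∘ onLastTwo φl) ∧
       (onLastTwo φl ∘ onFirstTwo swapPair ∘ onLastTwo φl ∘ onFirstTwo swapPair ∘
          onFirstTwo φl = onFirstTwo φl ∘ onLastTwo φl) ∧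
       (onLastTwo φr ∘ onFirstTwo swapPair ∘ onLastTwo φl ∘ onFirstTwo swapPair ∘
          onFirstTwo φl = onFirstTwo φl ∘ onLastTwo φr) ∧
       (onLastTwo φl ∘ onFirstTwo φr ∘ onLastTwo φr
          = onFirstTwo φr ∘ onLastTwo swapPair ∘ onFirstTwo φl) ∧
       (onLastTwo φr ∘ onFirstTwo φr ∘ onLastTwo φr
          = onFirstTwo φr ∘ onLastTwo swapPair ∘ onFirstTwo φr)) := by
  simp only [braid_onFirstTwo_swap_iff, braid_twice_swap_iff, braid_onLastTwo_swap_iff, IsEDS,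
    IsDiassoc, ← forall_and]
  refine forall_congr' fun a => forall_congr' fun b => forall_congr' fun c => ?_
  constructor
  · rintro ⟨⟨d1, d2, d3, d4, d5⟩, e1, e2, e3, e4, e5, e6, e7, e8, e9, e10⟩
    exact ⟨⟨d3, e1.symm, e2⟩, ⟨d1, e3, e4⟩, ⟨d1.trans d2, e5, e6⟩, ⟨d5.symm, e7, e8⟩,
      ⟨d4.symm, e9, e10⟩⟩
  · rintro ⟨⟨d3, e1, e2⟩, ⟨d1, e3, e4⟩, ⟨d1', e5, e6⟩, ⟨d5, e7, e8⟩, ⟨d4, e9, e10⟩⟩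
    exact ⟨⟨d1, d1.symm.trans d1', d3, d4.symm, d5.symm⟩,
      e1.symm, e2, e3, e4, e5, e6, e7, e8, e9, e10⟩
end

section
/- Let Ω be a finite nondegenerate EDS whose ← and → are given by α←β = α and α→β = β. Then there exist a group (H, ⋆), a nonempty set K, and a map θ : K → H such that Ω is isomorphic (as an EDS) to the EDS on H × K with (α,α')◁(β,β') = (α⁻¹⋆β, β') and (α,α')▷(β,β') = (θ(β')⋆β⁻¹⋆α, α'). -/
/-!
The left translations `L a = (a ◁ ·)` are permutations of `Ω`, and the first axiom says
`L (a ◁ b) = L b * (L a)⁻¹`, so their range `H` is a subgroup of `Equiv.Perm Ω`. The third axiom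
forces `b ▷ c = L (c ▷ c)⁻¹ (c ◁ b)`, whence `L (a ▷ c) = L a * (L c)⁻¹ * L (c ▷ c)`. The map
`a ↦ (L a)⁻¹ : Ω → H` is equivariant for the natural action of `H` on `Ω`, so that action is free
and `Ω ≃ H × Ω ⧸ H`. The second axiom makes `θ c = L (c ▷ c)⁻¹` constant on orbits, and in these
coordinates both operations take the required form.
-/

open Function MulAction

namespace MulAction

variable {G X : Type*} [Group G] [MulAction G X]

noncomputable def equivProdOrbitRelQuotient (ψ : X → G)
    (hψ : ∀ (g : G) (x : X), ψ (g • x) = g * ψ x) : X ≃ G × orbitRel.Quotient G X :=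
  Equiv.ofBijective (fun x => (ψ x, ⟦x⟧)) <| by
    refine ⟨fun x y hxy => ?_, fun ⟨g, q⟩ => ?_⟩
    · obtain ⟨hψxy, hxy⟩ := Prod.mk.inj hxy
      obtain ⟨g, rfl⟩ := Quotient.exact hxy.symm
      rw [hψ, right_eq_mul] at hψxy
      simp [hψxy]
    · induction q using Quotient.inductionOn with
      | h x => exact ⟨(g * (ψ x)⁻¹) • x, by simp [hψ]⟩

@[simp]
theorem equivProdOrbitRelQuotient_apply (ψ : X → G) (hψ : ∀ (g : G) (x : X), ψ (g • x) = g * ψ x)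
    (x : X) : equivProdOrbitRelQuotient ψ hψ x = (ψ x, ⟦x⟧) :=
  rfl

end MulAction

theorem bijective_apply_of_bijective_shear {α β : Type*} {f : α → β → β}
    (h : Bijective fun p : α × β => (p.1, f p.1 p.2)) (a : α) : Bijective (f a) := by
  refine ⟨fun x y hxy => ?_, fun z => ?_⟩
  · simpa using h.injective (a₁ := (a, x)) (a₂ := (a, y)) (by simp [hxy])
  · obtain ⟨⟨a', x⟩, hx⟩ := h.surjective (a, z)
    obtain ⟨rfl, rfl⟩ := Prod.mk.inj hx
    exact ⟨x, rfl⟩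

structure ProjectionEDSLaws {Ω : Type*} (tl tr : Ω → Ω → Ω) : Prop where
  bijective_tl : ∀ a, Bijective (tl a)
  tl_tl_tl : ∀ a b c, tl (tl a b) (tl a c) = tl b c
  tr_tl_tl : ∀ a b c, tr (tl a b) (tl a c) = tr b c
  tl_tr_tr : ∀ a b c, tl (tr a c) (tr b c) = tl a b

namespace ProjectionEDSLaws

variable {Ω : Type*} {tl tr : Ω → Ω → Ω}

local infixl:70 " ◁ " => tl
local infixl:70 " ▷ " => tr

variable (h : ProjectionEDSLaws tl tr)

noncomputable def leftPerm (a : Ω) : Equiv.Perm Ω :=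
  Equiv.ofBijective (tl a) (h.bijective_tl a)

@[simp]
theorem leftPerm_apply (a x : Ω) : h.leftPerm a x = a ◁ x :=
  rfl

@[simp]
theorem leftPerm_symm_apply_tl (a x : Ω) : (h.leftPerm a).symm (a ◁ x) = x :=
  (h.leftPerm a).symm_apply_apply x

theorem tl_leftPerm_symm_apply (a x : Ω) : a ◁ (h.leftPerm a).symm x = x :=
  (h.leftPerm a).apply_symm_apply x

theorem leftPerm_tl (a b : Ω) : h.leftPerm (a ◁ b) = h.leftPerm b * (h.leftPerm a)⁻¹ := by
  ext x
  obtain ⟨c, rfl⟩ := (h.bijective_tl a).surjective x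
  simp [h.tl_tl_tl]

theorem tr_eq_leftPerm_inv (b c : Ω) : b ▷ c = (h.leftPerm (c ▷ c))⁻¹ (c ◁ b) := by
  rw [Equiv.Perm.eq_inv_iff_eq, leftPerm_apply, h.tl_tr_tr]

theorem leftPerm_tr (a c : Ω) :
    h.leftPerm (a ▷ c) = h.leftPerm a * (h.leftPerm c)⁻¹ * h.leftPerm (c ▷ c) := by
  ext x
  obtain ⟨b, rfl⟩ : ∃ b, b ▷ c = x :=
    ⟨(h.leftPerm c)⁻¹ (h.leftPerm (c ▷ c) x), by
      rw [h.tr_eq_leftPerm_inv _ c]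
      simp [tl_leftPerm_symm_apply]⟩
  simp [h.tl_tr_tr]

variable [Nonempty Ω]

def leftPermRange : Subgroup (Equiv.Perm Ω) :=
  Subgroup.ofDiv (Set.range h.leftPerm) (Set.range_nonempty _) <| by
    rintro _ ⟨a, rfl⟩ _ ⟨b, rfl⟩
    exact ⟨b ◁ a, h.leftPerm_tl b a⟩

theorem leftPerm_mem_leftPermRange (a : Ω) : h.leftPerm a ∈ h.leftPermRange :=
  ⟨a, rfl⟩

noncomputable def leftCoord (a : Ω) : h.leftPermRange :=
  ⟨(h.leftPerm a)⁻¹, inv_mem (h.leftPerm_mem_leftPermRange a)⟩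

theorem leftCoord_tl (a b : Ω) : h.leftCoord (a ◁ b) = (h.leftCoord a)⁻¹ * h.leftCoord b := by
  ext1
  simp [leftCoord, h.leftPerm_tl]

theorem leftCoord_smul (g : h.leftPermRange) (a : Ω) :
    h.leftCoord (g • a) = g * h.leftCoord a := by
  obtain ⟨_, d, rfl⟩ := g
  ext1
  change (h.leftPerm (d ◁ a))⁻¹ = h.leftPerm d * (h.leftPerm a)⁻¹
  simp [h.leftPerm_tl]

theorem mk_tl (a b : Ω) : (⟦a ◁ b⟧ : orbitRel.Quotient h.leftPermRange Ω) = ⟦b⟧ :=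
  Quotient.sound ⟨⟨_, h.leftPerm_mem_leftPermRange a⟩, rfl⟩

theorem mk_tr (a b : Ω) : (⟦a ▷ b⟧ : orbitRel.Quotient h.leftPermRange Ω) = ⟦a⟧ :=
  Quotient.sound ⟨h.leftCoord (b ▷ b) * (h.leftCoord b)⁻¹, (h.tr_eq_leftPerm_inv a b).symm⟩

noncomputable def twist : orbitRel.Quotient h.leftPermRange Ω → h.leftPermRange :=
  Quotient.lift (fun c => h.leftCoord (c ▷ c)) <| by
    rintro _ c ⟨⟨_, d, rfl⟩, rfl⟩
    exact congrArg h.leftCoord (h.tr_tl_tl d c c)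

theorem leftCoord_tr (a b : Ω) :
    h.leftCoord (a ▷ b) = h.twist ⟦b⟧ * ((h.leftCoord b)⁻¹ * h.leftCoord a) := by
  ext1
  change (h.leftPerm (a ▷ b))⁻¹ =
    (h.leftPerm (b ▷ b))⁻¹ * ((h.leftPerm b)⁻¹⁻¹ * (h.leftPerm a)⁻¹)
  rw [h.leftPerm_tr a b]
  group

end ProjectionEDSLaws

theorem stmt14_general {Ω : Type} [Nonempty Ω] (tl tr : Ω → Ω → Ω)
    (haxioms : ∀ a b c : Ω,
      tl (tl a b) (tl a c) = tl b c ∧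
      tr (tl a b) (tl a c) = tr b c ∧
      tl (tr a c) (tr b c) = tl a b ∧
      tr (tr a c) (tr b c) = tr a b)
    (hl : Function.Bijective (fun p : Ω × Ω => (p.1, tl p.1 p.2))) :
    ∃ (H : Type) (mulH : H → H → H) (e : H) (inv : H → H),
      (∀ x y z : H, mulH (mulH x y) z = mulH x (mulH y z)) ∧
      (∀ x, mulH e x = x) ∧ (∀ x, mulH x e = x) ∧
      (∀ x, mulH (inv x) x = e) ∧ (∀ x, mulH x (inv x) = e) ∧
      ∃ (K : Type) (_ : Nonempty K) (θ : K → H) (Φ : Ω ≃ H × K),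
        (∀ a b : Ω,
          Φ (tl a b) = (mulH (inv (Φ a).1) (Φ b).1, (Φ b).2)) ∧
        (∀ a b : Ω,
          Φ (tr a b) = (mulH (θ (Φ b).2) (mulH (inv (Φ b).1) (Φ a).1), (Φ a).2)) := by
  have h : ProjectionEDSLaws tl tr :=
    ⟨bijective_apply_of_bijective_shear hl, fun a b c => (haxioms a b c).1,
      fun a b c => (haxioms a b c).2.1, fun a b c => (haxioms a b c).2.2.1⟩
  refine ⟨h.leftPermRange, (· * ·), 1, (·⁻¹), mul_assoc, one_mul, mul_one, inv_mul_cancel,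
    mul_inv_cancel, orbitRel.Quotient h.leftPermRange Ω, ⟨⟦Classical.arbitrary Ω⟧⟩, h.twist,
    equivProdOrbitRelQuotient h.leftCoord h.leftCoord_smul, fun a b => ?_, fun a b => ?_⟩
  · simp [h.leftCoord_tl, h.mk_tl]
  · simp [h.leftCoord_tr, h.mk_tr]

/-- Proposition 10: a finite nondegenerate EDS with `α←β = α`, `α→β = β`
(whose remaining axioms reduce to the four listed identities, nondegeneracy
meaning that `φ←(α,β) = (α, α◁β)` and `φ→(α,β) = (β, α▷β)` are bijective) is
isomorphic to the EDS `EDS*(H, ⋆, K, θ)` on `H × K` for some group `(H, ⋆)`,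
nonempty set `K` and map `θ : K → H`, where
`(α,α')◁(β,β') = (α⁻¹⋆β, β')` and `(α,α')▷(β,β') = (θ(β')⋆β⁻¹⋆α, α')`. -/
theorem stmt14 {Ω : Type} [Finite Ω] [Nonempty Ω] (tl tr : Ω → Ω → Ω)
    (haxioms : ∀ a b c : Ω,
      tl (tl a b) (tl a c) = tl b c ∧
      tr (tl a b) (tl a c) = tr b c ∧
      tl (tr a c) (tr b c) = tl a b ∧
      tr (tr a c) (tr b c) = tr a b)
    (hl : Function.Bijective (fun p : Ω × Ω => (p.1, tl p.1 p.2)))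
    (hr : Function.Bijective (fun p : Ω × Ω => (p.2, tr p.1 p.2))) :
    ∃ (H : Type) (mulH : H → H → H) (e : H) (inv : H → H),
      (∀ x y z : H, mulH (mulH x y) z = mulH x (mulH y z)) ∧
      (∀ x, mulH e x = x) ∧ (∀ x, mulH x e = x) ∧
      (∀ x, mulH (inv x) x = e) ∧ (∀ x, mulH x (inv x) = e) ∧
      ∃ (K : Type) (_ : Nonempty K) (θ : K → H) (Φ : Ω ≃ H × K),
        (∀ a b : Ω,
          Φ (tl a b) = (mulH (inv (Φ a).1) (Φ b).1, (Φ b).2)) ∧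
        (∀ a b : Ω,
          Φ (tr a b) = (mulH (θ (Φ b).2) (mulH (inv (Φ b).1) (Φ a).1), (Φ a).2)) :=
  stmt14_general tl tr haxioms hl
end

section
/- Let Ω be a finite nondegenerate EDS with α←β = α, α→β = β. Define α◂β to be the unique element with α◁(α◂β) = β, and α▸β to be the unique element with (α▸β)▷β = α. Then for all α, β, γ ∈ Ω: α◂(β◂γ) = (α◂β)◂γ, (α▸β)▸γ = α▸(β▸γ), (α◂β)▸γ = (α▸γ)◂β, and α◂(β▸γ) = β▸(α◂γ). -/
/-- For a finite nondegenerate EDS with `α←β = α`, `α→β = β` (axioms reduce to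
the four listed identities; nondegeneracy means `β ↦ α◁β` and `α ↦ α▷β` are
bijective), the operations `◂ = c` and `▸ = d` characterized by
`α◁(α◂β) = β` and `(α▸β)▷β = α` satisfy: `α◂(β◂γ) = (α◂β)◂γ`,
`(α▸β)▸γ = α▸(β▸γ)`, `(α◂β)▸γ = (α▸γ)◂β`, `α◂(β▸γ) = β▸(α◂γ)`. -/
theorem stmt15 {Ω : Type*} [Finite Ω] (tl tr : Ω → Ω → Ω)
    (haxioms : ∀ a b c : Ω,
      tl (tl a b) (tl a c) = tl b c ∧
      tr (tl a b) (tl a c) = tr b c ∧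
      tl (tr a c) (tr b c) = tl a b ∧
      tr (tr a c) (tr b c) = tr a b)
    (hbl : ∀ a : Ω, Function.Bijective (tl a))
    (hbr : ∀ b : Ω, Function.Bijective (fun a => tr a b))
    (c d : Ω → Ω → Ω)
    (hc : ∀ a b : Ω, tl a (c a b) = b)
    (hd : ∀ a b : Ω, tr (d a b) b = a) :
    ∀ a b g : Ω,
      c a (c b g) = c (c a b) g ∧
      d (d a b) g = d a (d b g) ∧
      d (c a b) g = c (d a g) b ∧
      c a (d b g) = d b (c a g) := by
  have h1 : ∀ a b c : Ω, tl (tl a b) (tl a c) = tl b c := fun a b c => (haxioms a b c).1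
  have h2 : ∀ a b c : Ω, tr (tl a b) (tl a c) = tr b c := fun a b c => (haxioms a b c).2.1
  have h3 : ∀ a b c : Ω, tl (tr a c) (tr b c) = tl a b := fun a b c => (haxioms a b c).2.2.1
  have h4 : ∀ a b c : Ω, tr (tr a c) (tr b c) = tr a b := fun a b c => (haxioms a b c).2.2.2
  intro a b g
  have key1 : ∀ x, tl b (tl a x) = tl (c a b) x := by
    intro x
    conv_lhs => rw [← hc a b]
    exact h1 a (c a b) x
  have key2 : ∀ x, tr (tr x g) b = tr x (d b g) := by
    intro x
    conv_lhs => rw [← hd b g]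
    exact h4 x (d b g) g
  have key3 : ∀ x, tl a (tr x g) = tl (d a g) x := by
    intro x
    conv_lhs => rw [← hd a g]
    exact h3 (d a g) x g
  have key4 : ∀ x, tr (tl a x) g = tr x (c a g) := by
    intro x
    conv_lhs => rw [← hc a g]
    exact h2 a x (c a g)
  refine ⟨?_, ?_, ?_, ?_⟩
  · apply (hbl a).injective
    apply (hbl b).injective
    rw [hc a (c b g), hc b g, key1, hc]
  · apply (hbr g).injective
    show tr (d (d a b) g) g = tr (d a (d b g)) g
    rw [hd]
    apply (hbr b).injective
    show tr (d a b) b = tr (tr (d a (d b g)) g) b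
    rw [hd, key2, hd]
  · apply (hbr g).injective
    show tr (d (c a b) g) g = tr (c (d a g) b) g
    rw [hd]
    apply (hbl a).injective
    rw [hc, key3, hc]
  · apply (hbl a).injective
    rw [hc]
    apply (hbr g).injective
    show tr (d b g) g = tr (tl a (d b (c a g))) g
    rw [hd, key4, hd]
end

section
/- Let Ω be an EDS and A a vector space with products ≺_α, ≻_α (α ∈ Ω) making A an Ω-dendriform algebra. Define on KΩ ⊗ A: (α⊗x)≺(β⊗y) = (α←β)⊗(x≺_{α◁β}y) and (α⊗x)≻(β⊗y) = (α→β)⊗(x≻_{α▷β}y). Then (KΩ⊗A, ≺, ≻) is a dendriform algebra: (u≺v)≺w = u≺(v≺w + v≻w), (u≻v)≺w = u≻(v≺w), and (u≺v + u≻v)≻w = u≻(v≻w). Conversely, if φ← and φ→ are surjective and KΩ⊗A is dendriform, then A is Ω-dendriform. -/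
/-- `Ω`-dendriform axioms for a pair of families of products on an additive
structure. -/
def IsOmegaDendriform {Ω A : Type*} [Add A] (l r tl tr : Ω → Ω → Ω)
    (p s : Ω → A → A → A) : Prop :=
  ∀ (α β : Ω) (x y z : A),
    p β (p α x y) z = p (l α β) x (p (tl α β) y z) + p (r α β) x (s (tr α β) y z) ∧
    s α x (p β y z) = p β (s α x y) z ∧
    s α x (s β y z) = s (r α β) (s (tr α β) x y) z + s (l α β) (p (tl α β) x y) z

/-- The (Loday) dendriform axioms. -/
def IsDendriform {M : Type*} [Add M] (P S : M → M → M) : Prop :=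
  ∀ x y z : M,
    P (P x y) z = P x (P y z + S y z) ∧
    P (S x y) z = S x (P y z) ∧
    S x (S y z) = S (P x y + S x y) z

/-- The product `(α⊗x) ≺ (β⊗y) = (α←β) ⊗ (x ≺_{α◁β} y)` on `KΩ ⊗ A ≅ Ω →₀ A`,
extended bilinearly. -/
noncomputable def tensorProd {K : Type*} [Field K] {Ω : Type*} {A : Type*}
    [AddCommGroup A] [Module K A] (l tl : Ω → Ω → Ω)
    (p : Ω → A →ₗ[K] A →ₗ[K] A) (u v : Ω →₀ A) : Ω →₀ A :=
  u.sum fun α x => v.sum fun β y => Finsupp.single (l α β) (p (tl α β) x y)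

/-!
The products on `KΩ ⊗ A ≅ Ω →₀ A` are biadditive, so the dendriform identities need only be
checked on pure tensors `α ⊗ x, β ⊗ y, γ ⊗ z`. There both sides collapse to pure tensors with a
common index (diassociativity), and the remaining EDS axioms turn their `A`-components into the
two sides of the corresponding `Ω`-dendriform identity at a pair of parameters `(α', β')`
determined by `α, β, γ`. When `φ←` and `φ→` are surjective, every pair `(α', β')` arises in this
way, which gives the converse.
-/

open Finsupp Function

theorem Finsupp.eq_zero_of_additive₃ {Ω A N : Type*} [AddZeroClass A] [AddLeftCancelMonoid N]
    {D : (Ω →₀ A) → (Ω →₀ A) → (Ω →₀ A) → N}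
    (add₁ : ∀ u u' v w, D (u + u') v w = D u v w + D u' v w)
    (add₂ : ∀ u v v' w, D u (v + v') w = D u v w + D u v' w)
    (add₃ : ∀ u v w w', D u v (w + w') = D u v w + D u v w')
    (hsingle : ∀ α β γ x y z, D (single α x) (single β y) (single γ z) = 0) :
    ∀ u v w, D u v w = 0 := by
  intro u v w
  induction u using Finsupp.induction_linear with
  | zero => simpa using add₁ 0 0 v w
  | add u u' hu hu' => rw [add₁, hu, hu', add_zero]
  | single α x =>
    induction v using Finsupp.induction_linear with
    | zero => simpa using add₂ (single α x) 0 0 w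
    | add v v' hv hv' => rw [add₂, hv, hv', add_zero]
    | single β y =>
      induction w using Finsupp.induction_linear with
      | zero => simpa using add₃ (single α x) (single β y) 0 0
      | add w w' hw hw' => rw [add₃, hw, hw', add_zero]
      | single γ z => exact hsingle α β γ x y z

section Realization

variable {Ω : Type*} {f g k : Ω → Ω → Ω}

theorem surjective_uncurry_of_surjective_pair
    (h : Surjective fun q : Ω × Ω => (f q.1 q.2, g q.1 q.2)) : Surjective (uncurry g) :=
  fun t => (h (t, t)).imp fun _ hq => congrArg Prod.snd hq

theorem exists_eq_and_apply_left_eq (hg : Surjective (uncurry g))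
    (hfk : Surjective fun q : Ω × Ω => (f q.1 q.2, k q.1 q.2)) (α' β' : Ω) :
    ∃ α β γ, k α β = α' ∧ g (f α β) γ = β' := by
  obtain ⟨⟨δ, γ⟩, hδγ⟩ := hg β'
  obtain ⟨⟨α, β⟩, hαβ⟩ := hfk (δ, α')
  obtain ⟨rfl, rfl⟩ := Prod.mk.inj hαβ
  exact ⟨α, β, γ, rfl, hδγ⟩

theorem exists_apply_right_eq_and_eq (hg : Surjective (uncurry g))
    (hfk : Surjective fun q : Ω × Ω => (f q.1 q.2, k q.1 q.2)) (α' β' : Ω) :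
    ∃ α β γ, g α (f β γ) = α' ∧ k β γ = β' := by
  obtain ⟨⟨α, δ⟩, hαδ⟩ := hg α'
  obtain ⟨⟨β, γ⟩, hβγ⟩ := hfk (δ, β')
  obtain ⟨rfl, rfl⟩ := Prod.mk.inj hβγ
  exact ⟨α, β, γ, hαδ, rfl⟩

end Realization

section TensorProd

variable {K Ω A : Type*} [Field K] [AddCommGroup A] [Module K A]

theorem tensorProd_single_single (l tl : Ω → Ω → Ω) (p : Ω → A →ₗ[K] A →ₗ[K] A)
    (α β : Ω) (x y : A) :
    tensorProd l tl p (single α x) (single β y) = single (l α β) (p (tl α β) x y) := by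
  rw [tensorProd, sum_single_index (by simp), sum_single_index (by simp)]

theorem tensorProd_add_left (l tl : Ω → Ω → Ω) (p : Ω → A →ₗ[K] A →ₗ[K] A) (u u' v : Ω →₀ A) :
    tensorProd l tl p (u + u') v = tensorProd l tl p u v + tensorProd l tl p u' v := by
  exact sum_add_index' (fun _ => by simp) fun _ _ _ => by simp [sum_add]

theorem tensorProd_add_right (l tl : Ω → Ω → Ω) (p : Ω → A →ₗ[K] A →ₗ[K] A) (u v v' : Ω →₀ A) :
    tensorProd l tl p u (v + v') = tensorProd l tl p u v + tensorProd l tl p u v' := by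
  rw [tensorProd, tensorProd, tensorProd, ← sum_add]
  refine sum_congr fun α _ => sum_add_index' (fun β => ?_) (fun β y y' => ?_) <;> simp

variable {l r tl tr : Ω → Ω → Ω} {p s : Ω → A →ₗ[K] A →ₗ[K] A}

theorem tensorProd_single_left_assoc_iff (hEDS : IsEDS l r tl tr) {α β γ α' β' : Ω}
    (hα' : tl α β = α') (hβ' : tl (l α β) γ = β') (x y z : A) :
    tensorProd l tl p (tensorProd l tl p (single α x) (single β y)) (single γ z) =
        tensorProd l tl p (single α x)
          (tensorProd l tl p (single β y) (single γ z) + tensorProd r tr s (single β y) (single γ z)) ↔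
      p β' (p α' x y) z = p (l α' β') x (p (tl α' β') y z) + p (r α' β') x (s (tr α' β') y z) := by
  obtain ⟨hdi, hax⟩ := hEDS
  obtain ⟨d1, d2, -, -, -⟩ := hdi α β γ
  obtain ⟨-, -, e3, e4, e5, e6, -, -, -, -⟩ := hax α β γ
  subst hα' hβ'
  simp only [tensorProd_single_single, tensorProd_add_right]
  rw [e3, e4, e5, e6, d1, ← d2, ← single_add, (single_injective _).eq_iff]

theorem tensorProd_single_middle_iff (hEDS : IsEDS l r tl tr) {α β γ α' β' : Ω}
    (hα' : tr α (l β γ) = α') (hβ' : tl β γ = β') (x y z : A) :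
    tensorProd l tl p (tensorProd r tr s (single α x) (single β y)) (single γ z) =
        tensorProd r tr s (single α x) (tensorProd l tl p (single β y) (single γ z)) ↔
      s α' x (p β' y z) = p β' (s α' x y) z := by
  obtain ⟨hdi, hax⟩ := hEDS
  obtain ⟨-, -, d3, -, -⟩ := hdi α β γ
  obtain ⟨e1, e2, -, -, -, -, -, -, -, -⟩ := hax α β γ
  subst hα' hβ'
  simp only [tensorProd_single_single]
  rw [e2, d3, e1, (single_injective _).eq_iff, eq_comm]

theorem tensorProd_single_right_assoc_iff (hEDS : IsEDS l r tl tr) {α β γ α' β' : Ω}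
    (hα' : tr α (r β γ) = α') (hβ' : tr β γ = β') (x y z : A) :
    tensorProd r tr s (single α x) (tensorProd r tr s (single β y) (single γ z)) =
        tensorProd r tr s
          (tensorProd l tl p (single α x) (single β y) + tensorProd r tr s (single α x) (single β y))
          (single γ z) ↔
      s α' x (s β' y z) = s (r α' β') (s (tr α' β') x y) z + s (l α' β') (p (tl α' β') x y) z := by
  obtain ⟨hdi, hax⟩ := hEDS
  obtain ⟨-, -, -, d4, d5⟩ := hdi α β γ
  obtain ⟨-, -, -, -, -, -, e7, e8, e9, e10⟩ := hax α β γ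
  subst hα' hβ'
  simp only [tensorProd_single_single, tensorProd_add_left]
  rw [← e7, ← e8, ← e9, ← e10, d4, d5, add_comm, ← single_add, (single_injective _).eq_iff]

theorem IsOmegaDendriform.isDendriform_tensorProd (hEDS : IsEDS l r tl tr)
    (hΩ : IsOmegaDendriform l r tl tr (fun α x y => p α x y) (fun α x y => s α x y)) :
    IsDendriform (tensorProd l tl p) (tensorProd r tr s) := by
  intro u v w
  refine ⟨sub_eq_zero.mp ?_, sub_eq_zero.mp ?_, sub_eq_zero.mp ?_⟩ <;> revert u v w <;>
    refine eq_zero_of_additive₃ ?_ ?_ ?_ fun α β γ x y z => sub_eq_zero.mpr ?_ <;>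
    try (intro _ _ _ _; simp only [tensorProd_add_left, tensorProd_add_right]; abel)
  · exact (tensorProd_single_left_assoc_iff hEDS rfl rfl x y z).mpr (hΩ _ _ x y z).1
  · exact (tensorProd_single_middle_iff hEDS rfl rfl x y z).mpr (hΩ _ _ x y z).2.1
  · exact (tensorProd_single_right_assoc_iff hEDS rfl rfl x y z).mpr (hΩ _ _ x y z).2.2

theorem IsDendriform.isOmegaDendriform_of_surjective (hEDS : IsEDS l r tl tr)
    (hφl : Surjective fun q : Ω × Ω => (l q.1 q.2, tl q.1 q.2))
    (hφr : Surjective fun q : Ω × Ω => (r q.1 q.2, tr q.1 q.2))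
    (hd : IsDendriform (tensorProd l tl p) (tensorProd r tr s)) :
    IsOmegaDendriform l r tl tr (fun α x y => p α x y) (fun α x y => s α x y) := by
  have htl := surjective_uncurry_of_surjective_pair hφl
  have htr := surjective_uncurry_of_surjective_pair hφr
  intro α' β' x y z
  refine ⟨?_, ?_, ?_⟩
  · obtain ⟨α, β, γ, hα', hβ'⟩ := exists_eq_and_apply_left_eq htl hφl α' β'
    exact (tensorProd_single_left_assoc_iff hEDS hα' hβ' x y z).mp (hd _ _ _).1
  · obtain ⟨α, β, γ, hα', hβ'⟩ := exists_apply_right_eq_and_eq htr hφl α' β'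
    exact (tensorProd_single_middle_iff hEDS hα' hβ' x y z).mp (hd _ _ _).2.1
  · obtain ⟨α, β, γ, hα', hβ'⟩ := exists_apply_right_eq_and_eq htr hφr α' β'
    exact (tensorProd_single_right_assoc_iff hEDS hα' hβ' x y z).mp (hd _ _ _).2.2

end TensorProd

/-- Proposition 18: for an EDS `Ω` and a vector space `A` with bilinear products
`≺_α, ≻_α`, if `A` is `Ω`-dendriform then `KΩ ⊗ A` with
`(α⊗x) ≺ (β⊗y) = (α←β)⊗(x ≺_{α◁β} y)`, `(α⊗x) ≻ (β⊗y) = (α→β)⊗(x ≻_{α▷β} y)`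
is dendriform; conversely, if `φ←` and `φ→` are surjective and `KΩ ⊗ A` is
dendriform, then `A` is `Ω`-dendriform. -/
theorem stmt17 {K : Type*} [Field K] {Ω : Type*} {A : Type*}
    [AddCommGroup A] [Module K A] (l r tl tr : Ω → Ω → Ω)
    (hEDS : IsEDS l r tl tr) (p s : Ω → A →ₗ[K] A →ₗ[K] A) :
    (IsOmegaDendriform l r tl tr (fun α x y => p α x y) (fun α x y => s α x y) →
      IsDendriform (tensorProd (K := K) l tl p) (tensorProd (K := K) r tr s)) ∧
    ((Function.Surjective (fun q : Ω × Ω => (l q.1 q.2, tl q.1 q.2)) →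
      Function.Surjective (fun q : Ω × Ω => (r q.1 q.2, tr q.1 q.2)) →
      IsDendriform (tensorProd (K := K) l tl p) (tensorProd (K := K) r tr s) →
      IsOmegaDendriform l r tl tr (fun α x y => p α x y) (fun α x y => s α x y))) :=
  ⟨IsOmegaDendriform.isDendriform_tensorProd hEDS,
    fun hφl hφr => IsDendriform.isOmegaDendriform_of_surjective hEDS hφl hφr⟩
end

section
/- Let (Ω, ⋆) be a group and consider the EDS with ← = → = ⋆, α◁β = β, α▷β = α. In the operad of Ω-dendriform algebras, an element m = Σ a_α ≺_α + Σ b_α ≻_α of the arity-2 component is associative (m∘(m,I) = m∘(I,m)) if and only if m = 0 or there exist a nonzero scalar λ and a subgroup G of Ω such that m = λ Σ_{α∈G}(≺_α + ≻_α). Equivalently: the coefficient conditions b_{α⋆β}b_α = b_α b_β, a_{α⋆β}a_β = a_α a_β, b_{α⋆β}b_β = b_α a_β, a_{α⋆β}a_α = a_α b_β for all α, β ∈ Ω hold if and only if either all a_α, b_α vanish, or there is a subgroup G and λ ≠ 0 with a_α = b_α = λ for α ∈ G and a_α = b_α = 0 otherwise. -/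
/-!
With `α = 1` the second condition reads `a β * a β = a 1 * a β`, so `a` is constant on its
support, and the first condition with `β = 1` gives the same for `b`. The fourth condition with
`α = 1` reads `a β * a 1 = a 1 * b β`, so `a = b` as soon as `a 1 ≠ 0`; if `a 1 = 0`, the third
condition at `α = β = 1` forces `b 1 = 0`, and everything vanishes. Otherwise the second condition
says that the support of `a` is closed under products and inverses, i.e. it is a subgroup.
-/

section AssociativeCoeffs

variable {G K : Type*} [Group G] [CommMonoidWithZero K]

/-- The coefficient form of `m ∘ (m, I) = m ∘ (I, m)` for `m = Σ a_α ≺_α + Σ b_α ≻_α`. -/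
def IsAssociativeCoeffs (a b : G → K) : Prop :=
  ∀ α β : G,
    b (α * β) * b α = b α * b β ∧
    a (α * β) * a β = a α * a β ∧
    b (α * β) * b β = b α * a β ∧
    a (α * β) * a α = a α * b β

theorem isAssociativeCoeffs_indicator (lam : K) (H : Subgroup G) :
    IsAssociativeCoeffs ((H : Set G).indicator fun _ => lam)
      ((H : Set G).indicator fun _ => lam) := by
  intro α β
  by_cases hα : α ∈ H <;> by_cases hβ : β ∈ H <;>
    simp [Set.indicator, hα, hβ, H.mul_mem_cancel_left, H.mul_mem_cancel_right]

theorem isAssociativeCoeffs_of_const_on_subgroup {a b : G → K} (lam : K) (H : Subgroup G)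
    (hmem : ∀ α ∈ H, a α = lam ∧ b α = lam) (hnmem : ∀ α ∉ H, a α = 0 ∧ b α = 0) :
    IsAssociativeCoeffs a b := by
  obtain ⟨rfl, rfl⟩ : (a = (H : Set G).indicator fun _ => lam) ∧
      (b = (H : Set G).indicator fun _ => lam) := by
    constructor <;> funext α <;> by_cases hα : α ∈ H <;> simp [hα, hmem, hnmem]
  exact isAssociativeCoeffs_indicator lam H

variable [IsCancelMulZero K]

def supportSubgroup (a : G → K) (hmul : ∀ α β, a (α * β) * a β = a α * a β) (h1 : a 1 ≠ 0) :
    Subgroup G where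
  carrier := {α | a α ≠ 0}
  one_mem' := h1
  mul_mem' {x y} hx hy := by
    simpa [mul_right_cancel₀ hy (hmul x y)] using hx
  inv_mem' {x} hx := by
    have h := hmul x⁻¹ x
    rw [inv_mul_cancel] at h
    simpa [← mul_right_cancel₀ hx h] using h1

namespace IsAssociativeCoeffs

variable {a b : G → K}

theorem apply_eq_apply_one_left (h : IsAssociativeCoeffs a b) {β : G} (hβ : a β ≠ 0) :
    a β = a 1 :=
  mul_right_cancel₀ hβ (by simpa using (h 1 β).2.1)

theorem apply_eq_apply_one_right (h : IsAssociativeCoeffs a b) {α : G} (hα : b α ≠ 0) :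
    b α = b 1 :=
  mul_left_cancel₀ hα (by simpa using (h α 1).1)

theorem eq_of_apply_one_ne_zero (h : IsAssociativeCoeffs a b) (h1 : a 1 ≠ 0) : a = b := by
  funext β
  have h4 := (h 1 β).2.2.2
  rw [one_mul, mul_comm (a β)] at h4
  exact mul_left_cancel₀ h1 h4

theorem eq_zero_left (h : IsAssociativeCoeffs a b) (h1 : a 1 = 0) : a = 0 := by
  funext β
  by_contra hβ
  exact hβ ((h.apply_eq_apply_one_left hβ).trans h1)

theorem eq_zero_right (h : IsAssociativeCoeffs a b) (h1 : a 1 = 0) : b = 0 := by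
  have hb1 : b 1 = 0 := by simpa [h1] using (h 1 1).2.2.1
  funext α
  by_contra hα
  exact hα ((h.apply_eq_apply_one_right hα).trans hb1)

end IsAssociativeCoeffs

end AssociativeCoeffs

/-- For a group `(G, ⋆)` and the EDS `EDS(G,⋆,⋆)` (`← = → = ⋆`, `α◁β = β`,
`α▷β = α`), an arity-2 element `m = Σ a_α ≺_α + Σ b_α ≻_α` of the operad of
`G`-dendriform algebras is associative iff the coefficient conditions
`b_{α⋆β}b_α = b_α b_β`, `a_{α⋆β}a_β = a_α a_β`, `b_{α⋆β}b_β = b_α a_β`,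
`a_{α⋆β}a_α = a_α b_β` hold; and this happens iff either all coefficients
vanish or there are a nonzero scalar `λ` and a subgroup `H ≤ G` with
`a_α = b_α = λ` for `α ∈ H` and `a_α = b_α = 0` otherwise. -/
theorem stmt18 {G : Type*} [Group G] {K : Type*} [Field K]
    (a b : G →₀ K) :
    (∀ α β : G,
        b (α * β) * b α = b α * b β ∧
        a (α * β) * a β = a α * a β ∧
        b (α * β) * b β = b α * a β ∧
        a (α * β) * a α = a α * b β) ↔
      ((a = 0 ∧ b = 0) ∨
        ∃ (lam : K) (H : Subgroup G), lam ≠ 0 ∧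
          (∀ α : G, α ∈ H → a α = lam ∧ b α = lam) ∧
          (∀ α : G, α ∉ H → a α = 0 ∧ b α = 0)) := by
  change IsAssociativeCoeffs (⇑a) (⇑b) ↔ _
  constructor
  · intro h
    by_cases h1 : a 1 = 0
    · exact .inl ⟨Finsupp.coe_eq_zero.mp (h.eq_zero_left h1),
        Finsupp.coe_eq_zero.mp (h.eq_zero_right h1)⟩
    have hab := h.eq_of_apply_one_ne_zero h1
    refine .inr ⟨a 1, supportSubgroup a (fun α β => (h α β).2.1) h1, h1, fun α hα => ?_,
      fun α hα => ?_⟩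
    · exact ⟨h.apply_eq_apply_one_left hα, hab ▸ h.apply_eq_apply_one_left hα⟩
    · exact ⟨not_not.mp hα, hab ▸ not_not.mp hα⟩
  · rintro (⟨rfl, rfl⟩ | ⟨lam, H, -, hmem, hnmem⟩)
    · intro α β
      simp
    · exact isAssociativeCoeffs_of_const_on_subgroup lam H hmem hnmem
end

section
/- Let Ω be a finite EDS with |Ω| = ω. The dimension of the arity-3 component of the Koszul dual operad P_Ω^! equals 3ω² + 2·coRk(Ω), where coRk(Ω) is the dimension of the kernel of the linear map φ : KΩ² → KΩ² × KΩ² sending (α,β) to (φ←(α,β), φ→(α,β)). Consequently, if the operad P_Ω of Ω-dendriform algebras is Koszul, then coRk(Ω) = 0 (Ω is weakly nondegenerate), since Koszulity forces dim P_Ω^!(3) = 3ω². -/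
open Finsupp

/-- The linear map `φ : KΩ² → KΩ² × KΩ²` sending a basis element `(α,β)` to
`(φ←(α,β), φ→(α,β))`, where `φ←(α,β) = (α←β, α◁β)`, `φ→(α,β) = (α→β, α▷β)`.
The corank of the EDS is the dimension of its kernel. -/
noncomputable def phiMap {K : Type} [Field K] {Ω : Type} (l r tl tr : Ω → Ω → Ω) :
    ((Ω × Ω) →₀ K) →ₗ[K] ((Ω × Ω) →₀ K) × ((Ω × Ω) →₀ K) :=
  Finsupp.lsum K fun q =>
    LinearMap.toSpanSingleton K _
      (Finsupp.single (l q.1 q.2, tl q.1 q.2) (1 : K),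
       Finsupp.single (r q.1 q.2, tr q.1 q.2) (1 : K))

/-- The basis of the arity-3 part of the free operad on the generators
`⊣_α, ⊢_α`: a shape (`false` for `∘(-, I)`, `true` for `∘(I, -)`), the outer
and inner generators (`false` for `⊣`, `true` for `⊢`), and their decorations. -/
abbrev Arity3Basis (Ω : Type) : Type := Bool × Bool × Bool × Ω × Ω

/-- The relations of the Koszul dual operad `P_Ω^!` in arity 3:
`⊣_β∘(⊣_α,I) = ⊣_{α←β}∘(I,⊣_{α◁β}) = ⊣_{α→β}∘(I,⊢_{α▷β})`;
`⊢_β∘(I,⊣_α) = ⊣_α∘(⊢_β,I)`;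
`⊢_α∘(I,⊢_β) = ⊢_{α→β}∘(⊢_{α▷β},I) = ⊢_{α←β}∘(⊣_{α◁β},I)`. -/
def dualRelations {K : Type} [Field K] {Ω : Type} (l r tl tr : Ω → Ω → Ω) :
    Set (Arity3Basis Ω →₀ K) :=
  {x | ∃ α β : Ω,
    x = Finsupp.single (false, false, false, β, α) 1
        - Finsupp.single (true, false, false, l α β, tl α β) 1 ∨
    x = Finsupp.single (true, false, false, l α β, tl α β) 1
        - Finsupp.single (true, false, true, r α β, tr α β) 1 ∨
    x = Finsupp.single (true, true, false, β, α) 1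
        - Finsupp.single (false, false, true, α, β) 1 ∨
    x = Finsupp.single (true, true, true, α, β) 1
        - Finsupp.single (false, true, true, r α β, tr α β) 1 ∨
    x = Finsupp.single (false, true, true, r α β, tr α β) 1
        - Finsupp.single (false, true, false, l α β, tl α β) 1}

/-!
The relations come in five families, each parametrised by `Ω²`, so they are the image of a
relation map `ρ : K^(5·ω²) → K^(8·ω²)` and `dim P_Ω^!(3) = 3ω² + dim ker ρ`. Split the arity-3
basis into its eight blocks (shape, outer and inner generator). The blocks `⊣∘(⊣,I)`,
`⊣∘(⊢,I)` and `⊢∘(I,⊢)` each meet a single family, bijectively, so those three families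
vanish on `ker ρ`; what remains of the other blocks says exactly that the second and the fifth
family are each killed by `φ = (φ←, φ→)`. Hence `ker ρ ≅ ker φ × ker φ`.
-/

namespace Finsupp

variable {R M α β γ : Type*} [Semiring R] [AddCommMonoid M] [Module R M]

theorem lcomapDomain_mapDomain_of_forall_ne {f : α → γ} {g : β → γ} (hg : Function.Injective g)
    (hfg : ∀ a b, f a ≠ g b) (x : α →₀ M) :
    lcomapDomain (R := R) g hg (mapDomain f x) = 0 := by
  ext b
  rw [lcomapDomain_apply, comapDomain_apply, mapDomain_of_notMem_range]
  · rfl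
  · rintro ⟨a, ha⟩
    exact hfg a b ha

end Finsupp

namespace DualOperadArity3

open Finsupp

variable {K : Type} [Field K] {Ω : Type}

def blockEmb (s : Bool × Bool × Bool) (q : Ω × Ω) : Arity3Basis Ω :=
  (s.1, s.2.1, s.2.2, q.1, q.2)

theorem blockEmb_eq_blockEmb_iff {s t : Bool × Bool × Bool} {p q : Ω × Ω} :
    blockEmb s p = blockEmb t q ↔ s = t ∧ p = q := by
  simp [blockEmb, Prod.ext_iff, and_assoc]

theorem blockEmb_injective (s : Bool × Bool × Bool) : Function.Injective (blockEmb (Ω := Ω) s) :=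
  fun _ _ h => (blockEmb_eq_blockEmb_iff.mp h).2

variable (K) in
noncomputable def blockIncl (s : Bool × Bool × Bool) :
    ((Ω × Ω) →₀ K) →ₗ[K] (Arity3Basis Ω →₀ K) :=
  lmapDomain K K (blockEmb s)

variable (K) in
noncomputable def blockRestrict (s : Bool × Bool × Bool) :
    (Arity3Basis Ω →₀ K) →ₗ[K] ((Ω × Ω) →₀ K) :=
  lcomapDomain (blockEmb s) (blockEmb_injective s)

@[simp]
theorem blockRestrict_blockIncl (s t : Bool × Bool × Bool) (x : (Ω × Ω) →₀ K) :
    blockRestrict K s (blockIncl K t x) = if t = s then x else 0 := by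
  split_ifs with h
  · subst h
    exact comapDomain_mapDomain _ (blockEmb_injective t) x
  · exact lcomapDomain_mapDomain_of_forall_ne _
      (fun a b hab => h (blockEmb_eq_blockEmb_iff.mp hab).1) x

variable (K) in
noncomputable def familyIncl (i : Fin 5) : ((Ω × Ω) →₀ K) →ₗ[K] ((Fin 5 × Ω × Ω) →₀ K) :=
  lmapDomain K K (Prod.mk i)

variable (K) in
noncomputable def familyProj (i : Fin 5) : ((Fin 5 × Ω × Ω) →₀ K) →ₗ[K] ((Ω × Ω) →₀ K) :=
  lcomapDomain (Prod.mk i) (Prod.mk_right_injective i)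

theorem familyProj_familyIncl (i j : Fin 5) (x : (Ω × Ω) →₀ K) :
    familyProj K i (familyIncl K j x) = if j = i then x else 0 := by
  split_ifs with h
  · subst h
    exact comapDomain_mapDomain _ (Prod.mk_right_injective j) x
  · exact lcomapDomain_mapDomain_of_forall_ne _
      (fun a b hab => h (Prod.ext_iff.mp hab).1) x

theorem sum_familyIncl_familyProj (c : (Fin 5 × Ω × Ω) →₀ K) :
    ∑ i, familyIncl K i (familyProj K i c) = c := by
  suffices h : ∑ i, familyIncl (Ω := Ω) K i ∘ₗ familyProj K i = LinearMap.id from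
    by simpa using LinearMap.congr_fun h c
  refine lhom_ext fun ⟨j, q⟩ a => ?_
  have hsingle : single (j, q) a = familyIncl K j (single q a) := mapDomain_single.symm
  simp [hsingle, familyProj_familyIncl, apply_ite]

variable (K) (l r tl tr : Ω → Ω → Ω)

noncomputable def phiLeft : ((Ω × Ω) →₀ K) →ₗ[K] ((Ω × Ω) →₀ K) :=
  lmapDomain K K fun q => (l q.1 q.2, tl q.1 q.2)

noncomputable def phiRight : ((Ω × Ω) →₀ K) →ₗ[K] ((Ω × Ω) →₀ K) :=
  lmapDomain K K fun q => (r q.1 q.2, tr q.1 q.2)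

theorem phiMap_eq_prod : phiMap (K := K) l r tl tr = (phiLeft K l tl).prod (phiRight K r tr) := by
  refine lhom_ext fun q a => ?_
  simp [phiMap, phiLeft, phiRight, Prod.smul_mk]

theorem mem_ker_phiMap_iff (x : (Ω × Ω) →₀ K) :
    x ∈ LinearMap.ker (phiMap l r tl tr) ↔ phiLeft K l tl x = 0 ∧ phiRight K r tr x = 0 := by
  rw [LinearMap.mem_ker, phiMap_eq_prod]
  exact Prod.ext_iff

/-- `relationFamily K l r tl tr i (single (α, β) 1)` is the `i`-th relation of `dualRelations`
at `(α, β)`. -/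
noncomputable def relationFamily : Fin 5 → ((Ω × Ω) →₀ K) →ₗ[K] (Arity3Basis Ω →₀ K) :=
  ![blockIncl K (false, false, false) ∘ₗ lmapDomain K K Prod.swap
      - blockIncl K (true, false, false) ∘ₗ phiLeft K l tl,
    blockIncl K (true, false, false) ∘ₗ phiLeft K l tl
      - blockIncl K (true, false, true) ∘ₗ phiRight K r tr,
    blockIncl K (true, true, false) ∘ₗ lmapDomain K K Prod.swap
      - blockIncl K (false, false, true),
    blockIncl K (true, true, true) - blockIncl K (false, true, true) ∘ₗ phiRight K r tr,
    blockIncl K (false, true, true) ∘ₗ phiRight K r tr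
      - blockIncl K (false, true, false) ∘ₗ phiLeft K l tl]

noncomputable def relationMap : ((Fin 5 × Ω × Ω) →₀ K) →ₗ[K] (Arity3Basis Ω →₀ K) :=
  linearCombination K fun p => relationFamily K l r tl tr p.1 (single p.2 1)

theorem range_relationMap :
    LinearMap.range (relationMap K l r tl tr) = Submodule.span K (dualRelations l r tl tr) := by
  rw [relationMap, range_linearCombination]
  congr 1
  ext x
  simp [dualRelations, relationFamily, blockIncl, phiLeft, phiRight, blockEmb, Fin.exists_fin_succ,
    exists_or, eq_comm]

theorem relationMap_familyIncl (i : Fin 5) (x : (Ω × Ω) →₀ K) :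
    relationMap K l r tl tr (familyIncl K i x) = relationFamily K l r tl tr i x := by
  suffices h : relationMap K l r tl tr ∘ₗ familyIncl K i = relationFamily K l r tl tr i from
    LinearMap.congr_fun h x
  refine lhom_ext fun q a => ?_
  simp [relationMap, familyIncl, ← map_smul]

theorem relationMap_apply (c : (Fin 5 × Ω × Ω) →₀ K) :
    relationMap K l r tl tr c = ∑ i, relationFamily K l r tl tr i (familyProj K i c) := by
  conv_lhs => rw [← sum_familyIncl_familyProj c]
  simp [relationMap_familyIncl]

theorem familyProj_of_relationMap_eq_zero {c : (Fin 5 × Ω × Ω) →₀ K}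
    (hc : relationMap K l r tl tr c = 0) :
    familyProj K 0 c = 0 ∧ familyProj K 2 c = 0 ∧ familyProj K 3 c = 0 ∧
      familyProj K 1 c ∈ LinearMap.ker (phiMap l r tl tr) ∧
      familyProj K 4 c ∈ LinearMap.ker (phiMap l r tl tr) := by
  have block (s : Bool × Bool × Bool) :
      ∑ i, blockRestrict K s (relationFamily K l r tl tr i (familyProj K i c)) = 0 := by
    rw [← map_sum, ← relationMap_apply, hc, map_zero]
  have h0 : familyProj K 0 c = 0 := mapDomain_injective Prod.swap_injective <| by
    simpa [Fin.sum_univ_five, relationFamily] using block (false, false, false)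
  have h2 : familyProj K 2 c = 0 := by
    simpa [Fin.sum_univ_five, relationFamily] using block (false, false, true)
  have h3 : familyProj K 3 c = 0 := by
    simpa [Fin.sum_univ_five, relationFamily] using block (true, true, true)
  have hL1 : phiLeft K l tl (familyProj K 1 c) = 0 := by
    simpa [Fin.sum_univ_five, relationFamily, h0] using block (true, false, false)
  have hR1 : phiRight K r tr (familyProj K 1 c) = 0 := by
    simpa [Fin.sum_univ_five, relationFamily] using block (true, false, true)
  have hL4 : phiLeft K l tl (familyProj K 4 c) = 0 := by
    simpa [Fin.sum_univ_five, relationFamily] using block (false, true, false)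
  have hR4 : phiRight K r tr (familyProj K 4 c) = 0 := by
    simpa [Fin.sum_univ_five, relationFamily, h3] using block (false, true, true)
  exact ⟨h0, h2, h3, (mem_ker_phiMap_iff ..).mpr ⟨hL1, hR1⟩, (mem_ker_phiMap_iff ..).mpr ⟨hL4, hR4⟩⟩

noncomputable def kerEmbedding :
    LinearMap.ker (phiMap (K := K) l r tl tr) × LinearMap.ker (phiMap (K := K) l r tl tr)
      →ₗ[K] ((Fin 5 × Ω × Ω) →₀ K) :=
  (familyIncl K 1 ∘ₗ (LinearMap.ker _).subtype).coprod (familyIncl K 4 ∘ₗ (LinearMap.ker _).subtype)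

theorem kerEmbedding_injective : Function.Injective (kerEmbedding K l r tl tr) := by
  rintro ⟨u, v⟩ ⟨u', v'⟩ h
  have h1 := congrArg (familyProj K 1) h
  have h4 := congrArg (familyProj K 4) h
  simp [kerEmbedding, familyProj_familyIncl] at h1 h4
  exact Prod.ext h1 h4

theorem range_kerEmbedding :
    LinearMap.range (kerEmbedding K l r tl tr) = LinearMap.ker (relationMap K l r tl tr) := by
  ext c
  constructor
  · rintro ⟨⟨⟨u, hu⟩, ⟨v, hv⟩⟩, rfl⟩
    rw [mem_ker_phiMap_iff] at hu hv
    simp [kerEmbedding, relationMap_familyIncl, relationFamily, hu, hv]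
  · intro hc
    obtain ⟨h0, h2, h3, h1, h4⟩ := familyProj_of_relationMap_eq_zero K l r tl tr hc
    refine ⟨(⟨_, h1⟩, ⟨_, h4⟩), ?_⟩
    conv_rhs => rw [← sum_familyIncl_familyProj c]
    simp [kerEmbedding, Fin.sum_univ_five, h0, h2, h3]

variable [Fintype Ω]

theorem finrank_ker_relationMap :
    Module.finrank K (LinearMap.ker (relationMap K l r tl tr))
      = 2 * Module.finrank K (LinearMap.ker (phiMap (K := K) l r tl tr)) := by
  -- instance search does not find this for a subspace of a `Finsupp` space
  have := Module.Free.of_divisionRing K (LinearMap.ker (phiMap (K := K) l r tl tr))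
  rw [← range_kerEmbedding, LinearMap.finrank_range_of_inj (kerEmbedding_injective K l r tl tr),
    Module.finrank_prod, two_mul]

theorem finrank_quotient_span_dualRelations :
    Module.finrank K ((Arity3Basis Ω →₀ K) ⧸ Submodule.span K (dualRelations (K := K) l r tl tr))
      = 3 * Fintype.card Ω ^ 2
        + 2 * Module.finrank K (LinearMap.ker (phiMap (K := K) l r tl tr)) := by
  have hsource : Module.finrank K ((Fin 5 × Ω × Ω) →₀ K) = 5 * Fintype.card Ω ^ 2 := by
    simp [Fintype.card_prod, sq]
  have htarget : Module.finrank K (Arity3Basis Ω →₀ K) = 8 * Fintype.card Ω ^ 2 := by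
    simp [Fintype.card_prod, sq]
    ring
  have hrank := LinearMap.finrank_range_add_finrank_ker (relationMap K l r tl tr)
  have hquot :=
    Submodule.finrank_quotient_add_finrank (Submodule.span K (dualRelations (K := K) l r tl tr))
  rw [range_relationMap, finrank_ker_relationMap, hsource] at hrank
  rw [htarget] at hquot
  omega

end DualOperadArity3

/-- Proposition: for a finite EDS `Ω` with `|Ω| = ω`, the arity-3 component of
the Koszul dual operad `P_Ω^!` — the quotient of the arity-3 part of the free
operad on `⊣_α, ⊢_α` by the span of the quadratic relations — has dimension
`3ω² + 2·coRk(Ω)`, where `coRk(Ω) = dim ker φ`. Consequently, if the operad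
`P_Ω` is Koszul (which forces this dimension to be `3ω²`), then `ker φ = ⊥`,
i.e. `Ω` is weakly nondegenerate. -/
theorem stmt19 {K : Type} [Field K] {Ω : Type} [Fintype Ω]
    (l r tl tr : Ω → Ω → Ω) :
    Module.finrank K
        ((Arity3Basis Ω →₀ K) ⧸ Submodule.span K (dualRelations (K := K) l r tl tr))
      = 3 * Fintype.card Ω ^ 2
        + 2 * Module.finrank K (LinearMap.ker (phiMap (K := K) l r tl tr)) ∧
    (Module.finrank K
        ((Arity3Basis Ω →₀ K) ⧸ Submodule.span K (dualRelations (K := K) l r tl tr))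
      = 3 * Fintype.card Ω ^ 2 →
      LinearMap.ker (phiMap (K := K) l r tl tr) = ⊥) := by
  have hdim := DualOperadArity3.finrank_quotient_span_dualRelations K l r tl tr
  refine ⟨hdim, fun hkoszul => Submodule.finrank_eq_zero.mp ?_⟩
  omega
end
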